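/- A continuous action φ: G × X → X on a compact metric space has the persistent shadowing property if and only if it has the shadowing property and is β-persistent. -/

import Mathlib

open MeasureTheory

def ContGroupAction (G : Type*) [Group G] (X : Type*) [MetricSpace X] (φ : G → X → X) : Prop :=
  (∀ g : G, Continuous (φ g)) ∧ (∀ g h : G, ∀ x : X, φ (g * h) x = φ g (φ h x)) ∧
    (∀ x : X, φ (1 : G) x = x)

def IsPseudoOrbit {G : Type*} [Group G] {X : Type*} [MetricSpace X]
    (S : Set G) (ψ : G → X → X) (δ : ℝ) (f : G → X) : Prop :=
  ∀ s ∈ S, ∀ g : G, dist (f (s * g)) (ψ s (f g)) < δ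

def CloseActions {G : Type*} [Group G] {X : Type*} [MetricSpace X]
    (S : Set G) (φ ψ : G → X → X) (δ : ℝ) : Prop :=
  ∀ s ∈ S, ∀ x : X, dist (φ s x) (ψ s x) < δ

def PersistentShadowing {G : Type*} [Group G] {X : Type*} [MetricSpace X]
    (S : Set G) (φ : G → X → X) : Prop :=
  ∀ ε > (0:ℝ), ∃ δ > (0:ℝ), ∀ ψ : G → X → X, ContGroupAction G X ψ → CloseActions S φ ψ δ →
    ∀ f : G → X, IsPseudoOrbit S ψ δ f → ∃ p : X, ∀ g : G, dist (f g) (ψ g p) < ε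

def Shadowing {G : Type*} [Group G] {X : Type*} [MetricSpace X]
    (S : Set G) (φ : G → X → X) : Prop :=
  ∀ ε > (0:ℝ), ∃ δ > (0:ℝ), ∀ f : G → X, IsPseudoOrbit S φ δ f →
    ∃ p : X, ∀ g : G, dist (f g) (φ g p) < ε

def PShSet {G : Type*} [Group G] {X : Type*} [MetricSpace X]
    (S : Set G) (φ : G → X → X) (δ ε : ℝ) : Set X :=
  {x | ∀ ψ : G → X → X, ContGroupAction G X ψ → CloseActions S φ ψ δ →
    ∀ f : G → X, IsPseudoOrbit S ψ δ f → f 1 = x →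
      ∃ p : X, ∀ g : G, dist (f g) (ψ g p) < ε}

def PShPoint {G : Type*} [Group G] {X : Type*} [MetricSpace X]
    (S : Set G) (φ : G → X → X) (x : X) : Prop :=
  ∀ ε > (0:ℝ), ∃ δ > (0:ℝ), x ∈ PShSet S φ δ ε

def ShPoint {G : Type*} [Group G] {X : Type*} [MetricSpace X]
    (S : Set G) (φ : G → X → X) (x : X) : Prop :=
  ∀ ε > (0:ℝ), ∃ δ > (0:ℝ), ∀ f : G → X, IsPseudoOrbit S φ δ f → f 1 = x →
    ∃ p : X, ∀ g : G, dist (f g) (φ g p) < ε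

def UPersisBetaPoint {G : Type*} [Group G] {X : Type*} [MetricSpace X]
    (S : Set G) (φ : G → X → X) (x : X) : Prop :=
  ∀ ε > (0:ℝ), ∃ δ > (0:ℝ), ∀ ψ : G → X → X, ContGroupAction G X ψ → CloseActions S φ ψ δ →
    ∀ x' : X, dist x' x < δ → ∃ y : X, ∀ g : G, dist (φ g x') (ψ g y) < ε

def BetaPersistent {G : Type*} [Group G] {X : Type*} [MetricSpace X]
    (S : Set G) (φ : G → X → X) : Prop :=
  ∀ ε > (0:ℝ), ∃ δ > (0:ℝ), ∀ ψ : G → X → X, ContGroupAction G X ψ → CloseActions S φ ψ δ →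
    ∀ x : X, ∃ y : X, ∀ g : G, dist (φ g x) (ψ g y) < ε

def CompatiblePSh {G : Type*} [Group G] {X : Type*} [MetricSpace X] [MeasurableSpace X]
    (S : Set G) (φ : G → X → X) (μ : Measure X) : Prop :=
  ∀ ε > (0:ℝ), ∃ δ > (0:ℝ), ∀ A : Set X, MeasurableSet A → 0 < μ A →
    (A ∩ PShSet S φ δ ε).Nonempty

def MeasSupp {X : Type*} [MetricSpace X] [MeasurableSpace X] (μ : Measure X) : Set X :=
  {x | ∀ U : Set X, IsOpen U → x ∈ U → 0 < μ U}

/-! Persistent shadowing with `ψ = φ` is shadowing, and applied to the pseudo orbit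
`g ↦ φ g x` of a perturbation `ψ` it is β-persistence. Conversely, a `δ`-pseudo orbit of a
`δ`-perturbation `ψ` is a `2δ`-pseudo orbit of `φ`; shadow it by a `φ`-orbit, then follow that
orbit by a `ψ`-orbit using β-persistence. -/

section

variable {G : Type*} [Group G] {X : Type*} [MetricSpace X] {S : Set G} {φ ψ : G → X → X}

theorem closeActions_self {δ : ℝ} (hδ : 0 < δ) : CloseActions S φ φ δ := fun s _ x => by
  simpa using hδ

theorem CloseActions.mono {δ δ' : ℝ} (h : CloseActions S φ ψ δ) (hδ : δ ≤ δ') :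
    CloseActions S φ ψ δ' := fun s hs x => (h s hs x).trans_le hδ

theorem isPseudoOrbit_orbit_of_closeActions (hmul : ∀ g h : G, ∀ x : X, φ (g * h) x = φ g (φ h x))
    {δ : ℝ} (hclose : CloseActions S φ ψ δ) (x : X) :
    IsPseudoOrbit S ψ δ (fun g => φ g x) := fun s hs g => by
  simpa only [hmul] using hclose s hs (φ g x)

theorem IsPseudoOrbit.of_closeActions {f : G → X} {δ δ' : ℝ} (hf : IsPseudoOrbit S ψ δ f)
    (hclose : CloseActions S φ ψ δ') : IsPseudoOrbit S φ (δ + δ') f := fun s hs g =>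
  calc dist (f (s * g)) (φ s (f g))
      ≤ dist (f (s * g)) (ψ s (f g)) + dist (φ s (f g)) (ψ s (f g)) := dist_triangle_right _ _ _
    _ < δ + δ' := add_lt_add (hf s hs g) (hclose s hs (f g))

theorem PersistentShadowing.shadowing (h : PersistentShadowing S φ)
    (hφ : ContGroupAction G X φ) : Shadowing S φ := fun ε hε => by
  obtain ⟨δ, hδ, hsh⟩ := h ε hε
  exact ⟨δ, hδ, hsh φ hφ (closeActions_self hδ)⟩

theorem PersistentShadowing.betaPersistent (h : PersistentShadowing S φ)
    (hmul : ∀ g h : G, ∀ x : X, φ (g * h) x = φ g (φ h x)) : BetaPersistent S φ := fun ε hε => by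
  obtain ⟨δ, hδ, hsh⟩ := h ε hε
  exact ⟨δ, hδ, fun ψ hψ hclose x =>
    hsh ψ hψ hclose _ (isPseudoOrbit_orbit_of_closeActions hmul hclose x)⟩

theorem Shadowing.persistentShadowing (hsh : Shadowing S φ) (hβ : BetaPersistent S φ) :
    PersistentShadowing S φ := fun ε hε => by
  obtain ⟨δs, hδs, hsh⟩ := hsh (ε / 2) (half_pos hε)
  obtain ⟨δb, hδb, hβ⟩ := hβ (ε / 2) (half_pos hε)
  refine ⟨min (δs / 2) δb, lt_min (half_pos hδs) hδb, fun ψ hψ hclose f hf => ?_⟩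
  have hfφ : IsPseudoOrbit S φ δs f := fun s hs g =>
    (hf.of_closeActions hclose s hs g).trans_le (by linarith [min_le_left (δs / 2) δb])
  obtain ⟨p, hp⟩ := hsh f hfφ
  obtain ⟨y, hy⟩ := hβ ψ hψ (hclose.mono (min_le_right _ _)) p
  exact ⟨y, fun g => calc
    dist (f g) (ψ g y) ≤ dist (f g) (φ g p) + dist (φ g p) (ψ g y) := dist_triangle _ _ _
    _ < ε / 2 + ε / 2 := add_lt_add (hp g) (hy g)
    _ = ε := add_halves ε⟩

end

theorem stmt15_general {G : Type*} [Group G] {X : Type*} [MetricSpace X]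
    (S : Set G)
    (φ : G → X → X) (hφ : ContGroupAction G X φ) :
    PersistentShadowing S φ ↔ Shadowing S φ ∧ BetaPersistent S φ :=
  ⟨fun h => ⟨h.shadowing hφ, h.betaPersistent hφ.2.1⟩,
    fun ⟨hsh, hβ⟩ => hsh.persistentShadowing hβ⟩

theorem stmt15 {G : Type*} [Group G] {X : Type*} [MetricSpace X] [CompactSpace X]
    (S : Set G) (hSfin : S.Finite) (hSsym : ∀ s ∈ S, s⁻¹ ∈ S)
    (hSgen : Subgroup.closure S = ⊤)
    (φ : G → X → X) (hφ : ContGroupAction G X φ) :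
    PersistentShadowing S φ ↔ Shadowing S φ ∧ BetaPersistent S φ :=
  stmt15_general S φ hφ
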